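/- Let α = 0.75, τ = 1.58 and ν₀ = 0.88, and define the transfer function W(p) = 1/(3α − 2 − α e^{−τp} − p) for complex p. Then for every ω ∈ ℝ the frequency inequality |W(−ν₀ + iω)| ≤ 0.64 holds; equivalently, |(3α − 2 + ν₀) − iω − α e^{τν₀} e^{−iτω}| ≥ 1/0.64 for all ω ∈ ℝ. In particular |W(−ν₀ + iω)| < Λ⁻¹ for the Lipschitz constant Λ = 0.45. -/

import Mathlib

/-!
Write `A = α e^{τν₀} ≈ 3.01` and `θ = τω`. The denominator of `W(-ν₀ + iω)` is
`D(ω) = 1.13 - iω - A e^{-iθ}`, and `D(-ω)` is the conjugate of `D(ω)`, so let `ω ≥ 0`.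
In each range of `θ` one crude estimate already gives `|D| ≥ 1/0.64 = 1.5625`:
for `θ ≤ π/2 - 1/4` the delay term dominates, `|D| ≥ A - |1.13 - iω|`; near `π/2` the
imaginary part `A sin θ - ω` is large; on `[π/2 + 1/4, π]` the real part `1.13 - A cos θ` is
large by Jordan's inequality; on `[π, 2π]` the imaginary part is at most `-ω ≤ -π/τ`; beyond
`2π` it is at most `A min(1, θ - 2π) - ω`.
-/

/-- The transfer function `W(p) = 1/(3α - 2 - α e^{-τp} - p)` of the linear part of the
Suarez–Schopf model rewritten around the symmetric equilibria. -/
noncomputable def SStransfer (α τ : ℝ) (p : ℂ) : ℂ :=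
  1 / (3 * (α : ℂ) - 2 - (α : ℂ) * Complex.exp (-(τ : ℂ) * p) - p)

open Complex ComplexConjugate
open scoped Real

namespace Real

lemma cos_le_two_div_pi_mul_pi_div_two_sub {x : ℝ} (hx : π / 2 ≤ x) (hx' : x ≤ π) :
    cos x ≤ 2 / π * (π / 2 - x) := by
  have := mul_le_sin (sub_nonneg.2 hx) (by linarith)
  rw [sin_sub_pi_div_two] at this
  linarith

lemma sin_nonpos_of_pi_le_of_le_two_pi {x : ℝ} (hx : π ≤ x) (hx' : x ≤ 2 * π) : sin x ≤ 0 :=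
  sin_sub_two_pi x ▸ sin_nonpos_of_nonpos_of_neg_pi_le (by linarith) (by linarith)

lemma sin_le_sub_two_pi {x : ℝ} (hx : 2 * π ≤ x) : sin x ≤ x - 2 * π :=
  sin_sub_two_pi x ▸ sin_le (by linarith)

end Real

namespace SuarezSchopf

noncomputable def SSdenom (α τ ν ω : ℝ) : ℂ :=
  (3 * α - 2 + ν : ℝ) - I * ω - (α * Real.exp (τ * ν) : ℝ) * exp (-I * (τ * ω : ℝ))

lemma SStransfer_neg_add_I_mul (α τ ν ω : ℝ) :
    SStransfer α τ (-ν + I * ω) = (SSdenom α τ ν ω)⁻¹ := by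
  rw [SStransfer, one_div, SSdenom]
  congr 1
  push_cast
  rw [mul_assoc, ← exp_add]
  ring_nf

lemma SSdenom_re (α τ ν ω : ℝ) :
    (SSdenom α τ ν ω).re = 3 * α - 2 + ν - α * Real.exp (τ * ν) * Real.cos (τ * ω) := by
  simp [SSdenom, exp_re, exp_im]

lemma SSdenom_im (α τ ν ω : ℝ) :
    (SSdenom α τ ν ω).im = α * Real.exp (τ * ν) * Real.sin (τ * ω) - ω := by
  simp [SSdenom, exp_re, exp_im]
  ring

lemma norm_SSdenom_neg (α τ ν ω : ℝ) : ‖SSdenom α τ ν (-ω)‖ = ‖SSdenom α τ ν ω‖ := by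
  have : SSdenom α τ ν (-ω) = conj (SSdenom α τ ν ω) := by
    apply Complex.ext
    · simp [SSdenom_re]
    · rw [conj_im, SSdenom_im, SSdenom_im, mul_neg, Real.sin_neg]
      ring
  rw [this, norm_conj]

lemma sub_sqrt_le_norm_SSdenom {α : ℝ} (hα : 0 ≤ α) (τ ν ω : ℝ) :
    α * Real.exp (τ * ν) - √((3 * α - 2 + ν) ^ 2 + ω ^ 2) ≤ ‖SSdenom α τ ν ω‖ := by
  have hz : ‖((3 * α - 2 + ν : ℝ) : ℂ) - I * ω‖ = √((3 * α - 2 + ν) ^ 2 + ω ^ 2) := by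
    rw [← neg_sq ω, ← norm_add_mul_I]
    congr 1
    push_cast
    ring
  have he : ‖((α * Real.exp (τ * ν) : ℝ) : ℂ) * exp (-I * (τ * ω : ℝ))‖ =
      α * Real.exp (τ * ν) := by
    simp [norm_exp, abs_of_nonneg hα]
  rw [← hz, ← he, SSdenom]
  exact (norm_sub_norm_le _ _).trans_eq (norm_sub_rev _ _)

/-- `e^{1.3904} = 4 e^δ` with `δ = 1.3904 - 2 log 2 ∈ (0, 0.005)`. -/
lemma delay_gain_mem_Icc : 0.75 * Real.exp (1.58 * 0.88) ∈ Set.Icc (3 : ℝ) 3.03 := by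
  have h4 : Real.exp (2 * Real.log 2) = 4 := by
    rw [mul_comm, Real.exp_mul, Real.exp_log two_pos]
    norm_num
  have hδ : Real.exp (1.58 * 0.88) = 4 * Real.exp (1.3904 - 2 * Real.log 2) := by
    rw [← h4, ← Real.exp_add]
    norm_num
  have hlog := Real.log_two_gt_d9
  have hlog' := Real.log_two_lt_d9
  have hup := Real.exp_bound_div_one_sub_of_interval' (x := 1.3904 - 2 * Real.log 2)
    (by linarith) (by linarith)
  have hlo := Real.one_le_exp (x := 1.3904 - 2 * Real.log 2) (by linarith)
  rw [lt_div_iff₀ (by linarith)] at hup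
  constructor <;> nlinarith

lemma le_norm_SSdenom_of_nonneg {ω : ℝ} (hω : 0 ≤ ω) :
    1 / 0.64 ≤ ‖SSdenom 0.75 1.58 0.88 ω‖ := by
  have hre := abs_re_le_norm (SSdenom 0.75 1.58 0.88 ω)
  have him := abs_im_le_norm (SSdenom 0.75 1.58 0.88 ω)
  have hdelay := sub_sqrt_le_norm_SSdenom (by norm_num : (0 : ℝ) ≤ 0.75) 1.58 0.88 ω
  have hc : (3 * 0.75 - 2 + 0.88 : ℝ) = 1.13 := by norm_num
  rw [SSdenom_re, hc, abs_le] at hre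
  rw [SSdenom_im, abs_le] at him
  rw [hc] at hdelay
  obtain ⟨hA, hA'⟩ := delay_gain_mem_Icc
  set A := 0.75 * Real.exp (1.58 * 0.88)
  have hπ := Real.pi_gt_d2
  have hπ' := Real.pi_lt_d2
  set θ := 1.58 * ω with hθ
  rcases le_or_gt θ (π / 2 - 1 / 4) with hθ₁ | hθ₁
  · have : √(1.13 ^ 2 + ω ^ 2) ≤ 1.41 := by
      rw [Real.sqrt_le_left (by norm_num)]
      nlinarith
    linarith
  rcases le_or_gt θ (π / 2 + 1 / 4) with hθ₂ | hθ₂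
  · have hcos := Real.one_sub_sq_div_two_le_cos (x := θ - π / 2)
    rw [Real.cos_sub_pi_div_two] at hcos
    have : (θ - π / 2) ^ 2 ≤ 1 / 16 := by nlinarith
    have : 2.88 ≤ A * Real.sin θ := by nlinarith
    linarith
  rcases le_or_gt θ π with hθ₃ | hθ₃
  · have hcos := Real.cos_le_two_div_pi_mul_pi_div_two_sub (by linarith) hθ₃
    have : 2 / π * (π / 2 - θ) ≤ -0.15 := by
      rw [div_mul_eq_mul_div, div_le_iff₀ (by positivity)]
      linarith
    have : A * Real.cos θ ≤ -0.45 := by nlinarith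
    linarith
  rcases le_or_gt θ (2 * π) with hθ₄ | hθ₄
  · have := Real.sin_nonpos_of_pi_le_of_le_two_pi hθ₃.le hθ₄
    have : A * Real.sin θ ≤ 0 := by nlinarith
    linarith
  rcases le_or_gt ω 4.6 with hω₅ | hω₅
  · have := Real.sin_le_sub_two_pi hθ₄.le
    have : A * Real.sin θ ≤ 3.03 * (θ - 2 * π) := by nlinarith
    linarith
  · have : A * Real.sin θ ≤ A := by nlinarith [Real.sin_le_one θ]
    linarith

lemma le_norm_SSdenom (ω : ℝ) : 1 / 0.64 ≤ ‖SSdenom 0.75 1.58 0.88 ω‖ := by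
  rcases le_total 0 ω with hω | hω
  · exact le_norm_SSdenom_of_nonneg hω
  · simpa only [norm_SSdenom_neg, neg_neg] using le_norm_SSdenom_of_nonneg (neg_nonneg.2 hω)

end SuarezSchopf

/-- For `α = 0.75`, `τ = 1.58`, `ν₀ = 0.88` the frequency inequality
`|W(-ν₀ + iω)| ≤ 0.64` holds for all `ω ∈ ℝ`; equivalently
`|(3α - 2 + ν₀) - iω - α e^{τν₀} e^{-iτω}| ≥ 1/0.64`. In particular
`|W(-ν₀ + iω)| < Λ⁻¹` for the Lipschitz constant `Λ = 0.45`. -/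
theorem suarez_schopf_frequency_inequality (ω : ℝ) :
    ‖(SStransfer 0.75 1.58 (-(0.88 : ℂ) + Complex.I * (ω : ℂ)))‖ ≤ 0.64 ∧
    (1 : ℝ) / 0.64 ≤ ‖((3 * (0.75 : ℂ) - 2 + (0.88 : ℂ)) - Complex.I * (ω : ℂ) -
      (0.75 : ℂ) * ((Real.exp (1.58 * 0.88) : ℝ) : ℂ) *
        Complex.exp (-Complex.I * ((1.58 * ω : ℝ) : ℂ)))‖ ∧
    ‖(SStransfer 0.75 1.58 (-(0.88 : ℂ) + Complex.I * (ω : ℂ)))‖ <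
      ((0.45 : ℝ))⁻¹ := by
  have hW : SStransfer 0.75 1.58 (-(0.88 : ℂ) + I * ω) =
      (SuarezSchopf.SSdenom 0.75 1.58 0.88 ω)⁻¹ := by
    rw [← SuarezSchopf.SStransfer_neg_add_I_mul]
    push_cast
    rfl
  have hD : (3 * (0.75 : ℂ) - 2 + 0.88) - I * ω - 0.75 * ((Real.exp (1.58 * 0.88) : ℝ) : ℂ) *
      exp (-I * ((1.58 * ω : ℝ) : ℂ)) = SuarezSchopf.SSdenom 0.75 1.58 0.88 ω := by
    simp only [SuarezSchopf.SSdenom]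
    push_cast
    rfl
  have hWle : ‖SStransfer 0.75 1.58 (-(0.88 : ℂ) + I * ω)‖ ≤ 0.64 := by
    rw [hW, norm_inv]
    exact inv_le_of_inv_le₀ (by norm_num) (one_div (0.64 : ℝ) ▸ SuarezSchopf.le_norm_SSdenom ω)
  exact ⟨hWle, hD ▸ SuarezSchopf.le_norm_SSdenom ω, hWle.trans_lt (by norm_num)⟩
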